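/- For y₁, y₂ ∈ {0,1} and α, β ∈ (0, π), applying the CNOT gate (control first qubit, target second qubit) to |y₁;α⟩ ⊗ |y₂;β⟩ yields Σ_{j∈{0,1}} (−1)^{j·y₂} √((1+(−1)^j cos α cos β)/2) |y₁⊕y₂; α⊡_j β⟩ ⊗ |j⟩. -/
import Mathlib


open Real

/-- The qubit state `|x; θ⟩ = cos(θ/2)|0⟩ + (-1)^x sin(θ/2)|1⟩`. -/
noncomputable def qubit (x : Fin 2) (θ : ℝ) : Fin 2 → ℝ :=
  ![Real.cos (θ / 2), (-1 : ℝ) ^ (x : ℕ) * Real.sin (θ / 2)]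

/-- Tensor product of two single-qubit vectors, in the basis `|00⟩,|01⟩,|10⟩,|11⟩`. -/
def tens (a b : Fin 2 → ℝ) : Fin 4 → ℝ :=
  ![a 0 * b 0, a 0 * b 1, a 1 * b 0, a 1 * b 1]

/-- The CNOT gate (control = first qubit, target = second qubit). -/
def CNOT : Matrix (Fin 4) (Fin 4) ℝ :=
  !![1, 0, 0, 0;
     0, 1, 0, 0;
     0, 0, 0, 1;
     0, 0, 1, 0]

/-- The check-node angle
`α ⊡_j β := arccos ((cos α + (-1)^j cos β)/(1 + (-1)^j cos α cos β))`. -/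
noncomputable def boxstar (α β : ℝ) (j : ℕ) : ℝ :=
  Real.arccos ((Real.cos α + (-1 : ℝ) ^ j * Real.cos β) /
    (1 + (-1 : ℝ) ^ j * (Real.cos α * Real.cos β)))

/-! Auxiliary lemmas -/

lemma key_cos (N D : ℝ) (hD : 0 < D) (h1 : -D ≤ N) (h2 : N ≤ D) :
    Real.sqrt (D / 2) * Real.cos (Real.arccos (N / D) / 2) = Real.sqrt (D + N) / 2 := by
  have hb1 : -1 ≤ N / D := by rw [le_div_iff₀ hD]; linarith
  have hb2 : N / D ≤ 1 := by rw [div_le_iff₀ hD]; linarith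
  rw [Real.cos_half (by linarith [Real.arccos_nonneg (N/D), Real.pi_pos])
      (Real.arccos_le_pi _), Real.cos_arccos hb1 hb2,
    ← Real.sqrt_mul (by positivity)]
  have : D / 2 * ((1 + N / D) / 2) = (D + N) / 4 := by field_simp; ring
  rw [this, Real.sqrt_div' _ (by norm_num : (0:ℝ) ≤ 4),
    show Real.sqrt 4 = 2 by rw [show (4:ℝ)=2^2 by norm_num, Real.sqrt_sq two_pos.le]]

lemma key_sin (N D : ℝ) (hD : 0 < D) (h1 : -D ≤ N) (h2 : N ≤ D) :
    Real.sqrt (D / 2) * Real.sin (Real.arccos (N / D) / 2) = Real.sqrt (D - N) / 2 := by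
  have hb1 : -1 ≤ N / D := by rw [le_div_iff₀ hD]; linarith
  have hb2 : N / D ≤ 1 := by rw [div_le_iff₀ hD]; linarith
  rw [Real.sin_half_eq_sqrt (Real.arccos_nonneg _)
      (by linarith [Real.arccos_le_pi (N/D), Real.pi_pos]), Real.cos_arccos hb1 hb2,
    ← Real.sqrt_mul (by positivity)]
  have : D / 2 * ((1 - N / D) / 2) = (D - N) / 4 := by field_simp; ring
  rw [this, Real.sqrt_div' _ (by norm_num : (0:ℝ) ≤ 4),
    show Real.sqrt 4 = 2 by rw [show (4:ℝ)=2^2 by norm_num, Real.sqrt_sq two_pos.le]]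

lemma sqrt_one_add_cos {x : ℝ} (h : x ∈ Set.Ioo 0 π) :
    Real.sqrt (1 + Real.cos x) = Real.sqrt 2 * Real.cos (x / 2) := by
  rw [Real.cos_half (by linarith [h.1, Real.pi_pos]) h.2.le,
    ← Real.sqrt_mul (by norm_num : (0:ℝ) ≤ 2)]
  congr 1; ring

lemma sqrt_one_sub_cos {x : ℝ} (h : x ∈ Set.Ioo 0 π) :
    Real.sqrt (1 - Real.cos x) = Real.sqrt 2 * Real.sin (x / 2) := by
  rw [Real.sin_half_eq_sqrt h.1.le (by linarith [h.2, Real.pi_pos]),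
    ← Real.sqrt_mul (by norm_num : (0:ℝ) ≤ 2)]
  congr 1; ring

lemma cosbounds {x : ℝ} (h : x ∈ Set.Ioo 0 π) : -1 < Real.cos x ∧ Real.cos x < 1 := by
  constructor
  · have := Real.cos_lt_cos_of_nonneg_of_le_pi h.1.le le_rfl h.2
    rwa [Real.cos_pi] at this
  · have := Real.cos_lt_cos_of_nonneg_of_le_pi le_rfl h.2.le h.1
    rwa [Real.cos_zero] at this

lemma E0 {α β : ℝ} (hα : α ∈ Set.Ioo 0 π) (hβ : β ∈ Set.Ioo 0 π) : Real.cos (α / 2) * Real.cos (β / 2) =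
    √(1 + Real.cos α * Real.cos β) / √2 *
      Real.cos (Real.arccos ((Real.cos α + Real.cos β) / (1 + Real.cos α * Real.cos β)) / 2) := by
  obtain ⟨hA1, hA2⟩ := cosbounds hα; obtain ⟨hB1, hB2⟩ := cosbounds hβ
  rw [← Real.sqrt_div (by nlinarith : (0:ℝ) ≤ 1 + Real.cos α * Real.cos β) 2,
    key_cos _ _ (by nlinarith) (by nlinarith) (by nlinarith),
    show (1 + Real.cos α * Real.cos β) + (Real.cos α + Real.cos β)
      = (1 + Real.cos α) * (1 + Real.cos β) by ring,
    Real.sqrt_mul (by nlinarith), sqrt_one_add_cos hα, sqrt_one_add_cos hβ]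
  have h2 : Real.sqrt 2 * Real.sqrt 2 = 2 := Real.mul_self_sqrt (by norm_num)
  linear_combination (-(Real.cos (α/2) * Real.cos (β/2) / 2)) * h2

lemma E1 {α β : ℝ} (hα : α ∈ Set.Ioo 0 π) (hβ : β ∈ Set.Ioo 0 π) : Real.cos (α / 2) * Real.sin (β / 2) =
    √(1 + -(Real.cos α * Real.cos β)) / √2 *
      Real.cos (Real.arccos ((Real.cos α + -Real.cos β) / (1 + -(Real.cos α * Real.cos β))) / 2) := by
  obtain ⟨hA1, hA2⟩ := cosbounds hα; obtain ⟨hB1, hB2⟩ := cosbounds hβ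
  rw [← Real.sqrt_div (by nlinarith : (0:ℝ) ≤ 1 + -(Real.cos α * Real.cos β)) 2,
    key_cos _ _ (by nlinarith) (by nlinarith) (by nlinarith),
    show (1 + -(Real.cos α * Real.cos β)) + (Real.cos α + -Real.cos β)
      = (1 + Real.cos α) * (1 - Real.cos β) by ring,
    Real.sqrt_mul (by nlinarith), sqrt_one_add_cos hα, sqrt_one_sub_cos hβ]
  have h2 : Real.sqrt 2 * Real.sqrt 2 = 2 := Real.mul_self_sqrt (by norm_num)
  linear_combination (-(Real.cos (α/2) * Real.sin (β/2) / 2)) * h2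

lemma E2 {α β : ℝ} (hα : α ∈ Set.Ioo 0 π) (hβ : β ∈ Set.Ioo 0 π) : Real.sin (α / 2) * Real.sin (β / 2) =
    √(1 + Real.cos α * Real.cos β) / √2 *
      Real.sin (Real.arccos ((Real.cos α + Real.cos β) / (1 + Real.cos α * Real.cos β)) / 2) := by
  obtain ⟨hA1, hA2⟩ := cosbounds hα; obtain ⟨hB1, hB2⟩ := cosbounds hβ
  rw [← Real.sqrt_div (by nlinarith : (0:ℝ) ≤ 1 + Real.cos α * Real.cos β) 2,
    key_sin _ _ (by nlinarith) (by nlinarith) (by nlinarith),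
    show (1 + Real.cos α * Real.cos β) - (Real.cos α + Real.cos β)
      = (1 - Real.cos α) * (1 - Real.cos β) by ring,
    Real.sqrt_mul (by nlinarith), sqrt_one_sub_cos hα, sqrt_one_sub_cos hβ]
  have h2 : Real.sqrt 2 * Real.sqrt 2 = 2 := Real.mul_self_sqrt (by norm_num)
  linear_combination (-(Real.sin (α/2) * Real.sin (β/2) / 2)) * h2

lemma E3 {α β : ℝ} (hα : α ∈ Set.Ioo 0 π) (hβ : β ∈ Set.Ioo 0 π) : Real.sin (α / 2) * Real.cos (β / 2) =
    √(1 + -(Real.cos α * Real.cos β)) / √2 *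
      Real.sin (Real.arccos ((Real.cos α + -Real.cos β) / (1 + -(Real.cos α * Real.cos β))) / 2) := by
  obtain ⟨hA1, hA2⟩ := cosbounds hα; obtain ⟨hB1, hB2⟩ := cosbounds hβ
  rw [← Real.sqrt_div (by nlinarith : (0:ℝ) ≤ 1 + -(Real.cos α * Real.cos β)) 2,
    key_sin _ _ (by nlinarith) (by nlinarith) (by nlinarith),
    show (1 + -(Real.cos α * Real.cos β)) - (Real.cos α + -Real.cos β)
      = (1 - Real.cos α) * (1 + Real.cos β) by ring,
    Real.sqrt_mul (by nlinarith), sqrt_one_sub_cos hα, sqrt_one_add_cos hβ]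
  have h2 : Real.sqrt 2 * Real.sqrt 2 = 2 := Real.mul_self_sqrt (by norm_num)
  linear_combination (-(Real.sin (α/2) * Real.cos (β/2) / 2)) * h2

/-- Applying CNOT to `|y₁;α⟩ ⊗ |y₂;β⟩` yields
`Σ_j (−1)^{j·y₂} √((1+(−1)^j cos α cos β)/2) |y₁⊕y₂; α⊡_j β⟩ ⊗ |j⟩`. -/
theorem cnot_apply (y₁ y₂ : Fin 2) (α β : ℝ)
    (hα : α ∈ Set.Ioo 0 π) (hβ : β ∈ Set.Ioo 0 π) :
    CNOT.mulVec (tens (qubit y₁ α) (qubit y₂ β)) =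
      ∑ j : Fin 2,
        ((-1 : ℝ) ^ ((j : ℕ) * (y₂ : ℕ)) *
          Real.sqrt ((1 + (-1 : ℝ) ^ (j : ℕ) * (Real.cos α * Real.cos β)) / 2)) •
          tens (qubit (y₁ + y₂) (boxstar α β (j : ℕ)))
            (fun i => if i = j then 1 else 0) := by
  fin_cases y₁ <;> fin_cases y₂ <;> funext i <;> fin_cases i <;>
    simp [CNOT, tens, qubit, boxstar, Matrix.mulVec, dotProduct,
      Fin.sum_univ_four, Fin.sum_univ_two] <;>
    first
      | exact E0 hα hβ
      | exact E1 hα hβ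
      | exact E2 hα hβ
      | exact E3 hα hβ
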